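/- arXiv:2605.12834 — 2 statements merged into one kernel-verified Lean document; each statement's English description precedes it below -/
import Mathlib

section
/- For every natural number r and every real number x, the r-th iterated central finite difference of the monomial x^(r+1) satisfies D^r(x^(r+1)) = (r+1)!·x; that is, the r-fold iterate of D applied to the function x ↦ x^(r+1) is the function x ↦ (r+1)!·x. -/
/-- The central finite-difference operator `(D f)(x) = f(x+1/2) − f(x−1/2)`. -/
noncomputable def cdiff (f : ℝ → ℝ) : ℝ → ℝ := fun x => f (x + 1/2) - f (x - 1/2)

open Polynomial

/-- Polynomial version of the central finite-difference operator. -/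
noncomputable def Tp (p : Polynomial ℝ) : Polynomial ℝ :=
  p.comp (X + C (1/2)) - p.comp (X - C (1/2))

lemma Tp_add (p q : Polynomial ℝ) : Tp (p + q) = Tp p + Tp q := by
  simp [Tp, add_comp]; ring

lemma Tp_Cmul (a : ℝ) (p : Polynomial ℝ) : Tp (C a * p) = C a * Tp p := by
  simp [Tp, mul_comp]; ring

lemma comp_lin_aux (p : Polynomial ℝ) (a : ℝ) (hp : p ≠ 0) :
    (p.comp (X + C a)).degree = p.degree ∧ (p.comp (X + C a)).leadingCoeff = p.leadingCoeff := by
  have h1 : (X + C a : Polynomial ℝ).natDegree = 1 := natDegree_X_add_C a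
  have hc : p.comp (X + C a) ≠ 0 := comp_X_add_C_ne_zero_iff.mpr hp
  constructor
  · rw [degree_eq_natDegree hc, degree_eq_natDegree hp, natDegree_comp, h1, mul_one]
  · rw [leadingCoeff_comp (by rw [h1]; norm_num), leadingCoeff_X_add_C, one_pow, mul_one]

lemma Tp_degree_lt (p : Polynomial ℝ) (hp : p ≠ 0) : (Tp p).degree < p.degree := by
  have h1 := comp_lin_aux p (1/2) hp
  have h2 := comp_lin_aux p (-(1/2)) hp
  have e : p.comp (X - C (1/2)) = p.comp (X + C (-(1/2))) := by rw [map_neg, sub_eq_add_neg]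
  have hne : p.comp (X + C (1/2 : ℝ)) ≠ 0 := fun h => by
    rw [h] at h1; exact hp (degree_eq_bot.mp (h1.1.symm.trans degree_zero))
  calc (Tp p).degree < (p.comp (X + C (1/2))).degree := by
        apply degree_sub_lt _ hne
        · rw [h1.2, e, h2.2]
        · rw [h1.1, e, h2.1]
    _ = p.degree := h1.1

lemma Tp_kill : ∀ (n : ℕ) (p : Polynomial ℝ), p.degree < (n : ℕ) → Tp^[n] p = 0 := by
  intro n
  induction n with
  | zero =>
    intro p hp
    simpa using degree_eq_bot.mp (Nat.WithBot.lt_zero_iff.mp (by exact_mod_cast hp))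
  | succ n ih =>
    intro p hp
    rw [Function.iterate_succ_apply]
    apply ih
    rcases eq_or_ne p 0 with rfl | h
    · have : Tp 0 = 0 := by simp [Tp]
      rw [this]
      exact bot_lt_iff_ne_bot.mpr (by simp)
    · exact lt_of_lt_of_le (Tp_degree_lt p h) (by exact_mod_cast Order.le_of_lt_succ (by exact_mod_cast hp))

lemma Tp_iter_add (n : ℕ) (p q : Polynomial ℝ) :
    Tp^[n] (p + q) = Tp^[n] p + Tp^[n] q := by
  induction n generalizing p q with
  | zero => simp
  | succ n ih => simp only [Function.iterate_succ_apply, Tp_add, ih]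

lemma Tp_iter_Cmul (n : ℕ) (a : ℝ) (p : Polynomial ℝ) :
    Tp^[n] (C a * p) = C a * Tp^[n] p := by
  induction n generalizing p with
  | zero => simp
  | succ n ih => simp only [Function.iterate_succ_apply, Tp_Cmul, ih]

lemma Tp_Xpow_coeff (N k : ℕ) :
    (Tp (X ^ N)).coeff k = ((1/2:ℝ)^(N-k) - (-(1/2:ℝ))^(N-k)) * N.choose k := by
  have e : Tp (X ^ N) = (X + C (1/2:ℝ))^N - (X + C (-(1/2:ℝ)))^N := by
    simp [Tp, pow_comp, X_comp, map_neg, sub_eq_add_neg]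
  rw [e, coeff_sub, coeff_X_add_C_pow, coeff_X_add_C_pow]
  ring

lemma Tp_Xpow_key (n : ℕ) :
    ∃ q : Polynomial ℝ, q.degree < (n : ℕ) ∧
      Tp (X ^ (n+2)) = C ((n+2 : ℕ) : ℝ) * X ^ (n+1) + q := by
  refine ⟨Tp (X ^ (n+2)) - C ((n+2 : ℕ) : ℝ) * X ^ (n+1), ?_, by ring⟩
  rw [degree_lt_iff_coeff_zero]
  intro m hm
  have hm' : n ≤ m := by exact_mod_cast hm
  rw [coeff_sub, Tp_Xpow_coeff, coeff_C_mul, coeff_X_pow]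
  rcases eq_or_lt_of_le hm' with h | h
  · subst h
    norm_num [Nat.sub_sub_self]
  rcases eq_or_lt_of_le (Nat.succ_le_of_lt h) with h1 | h1
  · -- m = n+1
    rw [← h1]
    have : n + 2 - (n+1) = 1 := by omega
    rw [this]
    norm_num
    ring
  rcases eq_or_lt_of_le (Nat.succ_le_of_lt h1) with h2 | h2
  · -- m = n+2
    rw [← h2]
    simp
  · -- m > n+2
    rw [Nat.choose_eq_zero_of_lt h2]
    have : m ≠ n + 1 := by omega
    simp [this]

lemma Tp_main (r : ℕ) : Tp^[r] (X ^ (r+1)) = C ((Nat.factorial (r+1) : ℝ)) * X := by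
  induction r with
  | zero => simp
  | succ r ih =>
    obtain ⟨q, hq, he⟩ := Tp_Xpow_key r
    rw [Function.iterate_succ_apply, he, Tp_iter_add, Tp_iter_Cmul, ih, Tp_kill r q hq,
      add_zero, ← mul_assoc, ← C_mul]
    have : ((r+2:ℕ):ℝ) * ((r + 1).factorial : ℝ) = ((r+1+1).factorial : ℝ) := by
      rw [Nat.factorial_succ (r+1)]
      push_cast
      ring
    rw [this]

lemma cdiff_iter_eval (r : ℕ) (p : Polynomial ℝ) :
    cdiff^[r] (fun y => p.eval y) = fun y => (Tp^[r] p).eval y := by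
  induction r generalizing p with
  | zero => simp
  | succ r ih =>
    rw [Function.iterate_succ_apply, Function.iterate_succ_apply, ← ih]
    congr 1
    funext y
    simp [cdiff, Tp, eval_comp]

/-- The `r`-th iterated central finite difference of the monomial `x^(r+1)`
satisfies `D^r(x^(r+1)) = (r+1)!·x`. -/
theorem iterated_central_difference (r : ℕ) (x : ℝ) :
    (cdiff^[r] (fun y => y ^ (r+1))) x = (Nat.factorial (r+1) : ℝ) * x := by
  have : (fun y : ℝ => y ^ (r+1)) = fun y => (X ^ (r+1) : Polynomial ℝ).eval y := by
    funext y; simp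
  rw [this, cdiff_iter_eval, Tp_main]
  simp
end

section
/- For every natural number r and every real number x, the r-th iterated central finite difference of x^(r+1) is given by the signed binomial sum ∑_{j=0}^{r} (−1)^j · C(r,j) · (x + r/2 − j)^(r+1) = (r+1)!·x, where C(r,j) denotes the binomial coefficient. -/
/-!
The sum is the `r`-th central difference of `t ↦ t ^ (r + 1)` at `x`, i.e. the `r`-th forward
difference at `x - r / 2`. The `n`-th forward difference of `t ↦ t ^ (n + 1)` is the affine function
`(n + 1)! * y + n! * (n + 1).choose 2 = (n + 1)! * (y + n / 2)`, so the half-step shift cancels the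
constant term.
-/

open Finset Function Nat fwdDiff

variable {R : Type*} [CommRing R]

theorem fwdDiff_pow (m : ℕ) :
    Δ_[1] (fun r : R ↦ r ^ m) = ∑ i ∈ range m, m.choose i • fun r : R ↦ r ^ i := by
  ext x
  simp [nsmul_eq_mul, fwdDiff, add_pow, sum_range_succ, mul_comm]

theorem fwdDiff_iter_pow_succ (n : ℕ) (y : R) :
    Δ_[1] ^[n] (fun r : R ↦ r ^ (n + 1)) y = (n + 1)! * y + n ! * (n + 1).choose 2 := by
  induction n generalizing y with
  | zero => simp
  | succ n ih =>
    have lower : ∀ i ∈ range n, Δ_[1] ^[n] ((n + 2).choose i • fun r : R ↦ r ^ i) = 0 :=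
      fun i hi ↦ by
        rw [fwdDiff_iter_const_smul, fwdDiff_iter_pow_eq_zero_of_lt (mem_range.mp hi), smul_zero]
    rw [iterate_succ_apply, fwdDiff_pow, fwdDiff_iter_finsetSum, sum_range_succ, sum_range_succ,
      sum_eq_zero lower, zero_add]
    simp only [fwdDiff_iter_const_smul, Pi.add_apply, Pi.smul_apply, fwdDiff_iter_eq_factorial, ih]
    have pascal : (n + 2).choose 2 = (n + 1).choose 2 + (n + 1) := by
      simp [Nat.choose_succ_succ, add_comm]
    have choose_two_mul_two : ((n + 1).choose 2 : R) * 2 = (n + 1) * n := by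
      have h : (n + 1).choose 2 * 2 = (n + 1) * n := by
        simpa using Nat.choose_succ_right_eq (n + 1) 1
      simpa using congrArg (Nat.cast : ℕ → R) h
    rw [Pi.natCast_apply, Nat.choose_succ_self_right,
      Nat.choose_symm_of_eq_add (by ring : n + 2 = n + 2), pascal]
    push_cast [factorial_succ, nsmul_eq_mul]
    linear_combination (n ! : R) * choose_two_mul_two

theorem fwdDiff_iter_eq_sum_shift_rev (f : R → R) (n : ℕ) (y : R) :
    Δ_[1] ^[n] f y = ∑ j ∈ range (n + 1), (-1) ^ j * (n.choose j : R) * f (y + n - j) := by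
  rw [fwdDiff_iter_eq_sum_shift, ← sum_range_reflect]
  refine sum_congr rfl fun j hj_mem ↦ ?_
  have hj : j ≤ n := Nat.lt_succ_iff.mp (mem_range.mp hj_mem)
  rw [add_tsub_cancel_right, Nat.sub_sub_self hj, Nat.choose_symm hj, zsmul_eq_mul, nsmul_one]
  push_cast [hj]
  rw [add_sub_assoc]

/-- The explicit signed binomial sum form of the finite-difference factorial
identity: `∑_{j=0}^{r} (−1)^j C(r,j) (x + r/2 − j)^(r+1) = (r+1)!·x`. -/
theorem central_difference_binomial_sum (r : ℕ) (x : ℝ) :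
    ∑ j ∈ Finset.range (r+1),
        (-1 : ℝ) ^ j * (r.choose j : ℝ) * (x + (r : ℝ)/2 - (j : ℝ)) ^ (r+1)
      = (Nat.factorial (r+1) : ℝ) * x := by
  have half_shift : ∀ j : ℕ, x + (r : ℝ) / 2 - j = x - r / 2 + r - j := fun j ↦ by ring
  simp_rw [half_shift, ← fwdDiff_iter_eq_sum_shift_rev (fun t : ℝ ↦ t ^ (r + 1)),
    fwdDiff_iter_pow_succ]
  push_cast [Nat.cast_choose_two, factorial_succ]
  ring
end
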